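/- arXiv:2603.29542 — 5 statements merged into one kernel-verified Lean document; each statement's English description precedes it below -/
import Mathlib

section
/- Regard q1 and k1 as functions of the home tax t (all other parameters fixed). At any t ∈ (0,1) where the maintained assumptions hold and additionally k1 < c1, these functions are differentiable with dq1/dt = −(1/Δ)·((c1 − k1)/(2(1−b1)(1−t)²))·S2, and consequently dq1/dt < 0 and dk1/dt = (dq1/dt)/((1−s1)φ1) < 0: the home tax strictly reduces foreign output and foreign process R&D. -/
/-- Effective slope term of the foreign firm's best response under process R&D. -/
noncomputable def Sone (b1 t s1 φ1 : ℝ) : ℝ :=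
  1 - 1 / (2 * (1 - b1) * (1 - t) * (1 - s1) * φ1)

/-- Effective slope term of the home firm's best response under process R&D. -/
noncomputable def Stwo (b2 s2 φ2 : ℝ) : ℝ :=
  1 - 1 / (2 * (1 - b2) * (1 - s2) * φ2)

/-- Network-interaction term `M = m² / (4(1−b1)(1−b2))`. -/
noncomputable def Mnet (m b1 b2 : ℝ) : ℝ := m ^ 2 / (4 * (1 - b1) * (1 - b2))

/-- Determinant `Δ = S1·S2 − M` of the process-R&D equilibrium system. -/
noncomputable def Dk (m b1 b2 t s1 s2 φ1 φ2 : ℝ) : ℝ :=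
  Sone b1 t s1 φ1 * Stwo b2 s2 φ2 - Mnet m b1 b2

/-- Equilibrium foreign output `q1` under process R&D. -/
noncomputable def q1e (a c1 c2 m b1 b2 t s1 s2 φ1 φ2 : ℝ) : ℝ :=
  ((a - c1 / (1 - t)) * Stwo b2 s2 φ2 / (2 * (1 - b1))
      - m * (a - c2) / (2 * (1 - b2))) / Dk m b1 b2 t s1 s2 φ1 φ2

/-- Equilibrium home output `q2` under process R&D. -/
noncomputable def q2e (a c1 c2 m b1 b2 t s1 s2 φ1 φ2 : ℝ) : ℝ :=
  ((a - c2) * Sone b1 t s1 φ1 / (2 * (1 - b2))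
      - m * (a - c1 / (1 - t)) / (2 * (1 - b1))) / Dk m b1 b2 t s1 s2 φ1 φ2

/-- Equilibrium foreign process R&D `k1 = q1 / ((1−s1)φ1)`. -/
noncomputable def k1e (a c1 c2 m b1 b2 t s1 s2 φ1 φ2 : ℝ) : ℝ :=
  q1e a c1 c2 m b1 b2 t s1 s2 φ1 φ2 / ((1 - s1) * φ1)

/-- Equilibrium home process R&D `k2 = q2 / ((1−s2)φ2)`. -/
noncomputable def k2e (a c1 c2 m b1 b2 t s1 s2 φ1 φ2 : ℝ) : ℝ :=
  q2e a c1 c2 m b1 b2 t s1 s2 φ1 φ2 / ((1 - s2) * φ2)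

set_option maxHeartbeats 1000000 in
/-- The home tax strictly reduces foreign output and foreign process
R&D: `dq1/dt = −(1/Δ)·((c1−k1)/(2(1−b1)(1−t)²))·S2 < 0` and
`dk1/dt = (dq1/dt)/((1−s1)φ1) < 0`. -/
theorem tax_reduces_foreign_output_and_processRD
    (a c1 c2 m b1 b2 t s1 s2 φ1 φ2 : ℝ)
    (ha : 0 < a) (hc1 : 0 < c1) (hc2 : 0 < c2)
    (hb1 : b1 ∈ Set.Ioo (0 : ℝ) 1) (hb2 : b2 ∈ Set.Ioo (0 : ℝ) 1)
    (ht : t ∈ Set.Ioo (0 : ℝ) 1)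
    (hs1 : s1 ∈ Set.Ioo (0 : ℝ) 1) (hs2 : s2 ∈ Set.Ioo (0 : ℝ) 1)
    (hφ1 : 0 < φ1) (hφ2 : 0 < φ2)
    (hS1 : Sone b1 t s1 φ1 > 0) (hS2 : Stwo b2 s2 φ2 > 0)
    (hΔ : Dk m b1 b2 t s1 s2 φ1 φ2 > 0)
    (hq1 : q1e a c1 c2 m b1 b2 t s1 s2 φ1 φ2 > 0)
    (hq2 : q2e a c1 c2 m b1 b2 t s1 s2 φ1 φ2 > 0)
    (hkc : k1e a c1 c2 m b1 b2 t s1 s2 φ1 φ2 < c1) :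
    HasDerivAt (fun τ => q1e a c1 c2 m b1 b2 τ s1 s2 φ1 φ2)
      (-(1 / Dk m b1 b2 t s1 s2 φ1 φ2) *
        ((c1 - k1e a c1 c2 m b1 b2 t s1 s2 φ1 φ2) / (2 * (1 - b1) * (1 - t) ^ 2)) *
        Stwo b2 s2 φ2) t ∧
    -(1 / Dk m b1 b2 t s1 s2 φ1 φ2) *
        ((c1 - k1e a c1 c2 m b1 b2 t s1 s2 φ1 φ2) / (2 * (1 - b1) * (1 - t) ^ 2)) *
        Stwo b2 s2 φ2 < 0 ∧
    HasDerivAt (fun τ => k1e a c1 c2 m b1 b2 τ s1 s2 φ1 φ2)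
      ((-(1 / Dk m b1 b2 t s1 s2 φ1 φ2) *
        ((c1 - k1e a c1 c2 m b1 b2 t s1 s2 φ1 φ2) / (2 * (1 - b1) * (1 - t) ^ 2)) *
        Stwo b2 s2 φ2) / ((1 - s1) * φ1)) t ∧
    (-(1 / Dk m b1 b2 t s1 s2 φ1 φ2) *
        ((c1 - k1e a c1 c2 m b1 b2 t s1 s2 φ1 φ2) / (2 * (1 - b1) * (1 - t) ^ 2)) *
        Stwo b2 s2 φ2) / ((1 - s1) * φ1) < 0 := by
  obtain ⟨hb1l, hb1r⟩ := hb1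
  obtain ⟨hb2l, hb2r⟩ := hb2
  obtain ⟨htl, htr⟩ := ht
  obtain ⟨hs1l, hs1r⟩ := hs1
  have h1tp : (0:ℝ) < 1 - t := by linarith
  have h1t : (1 : ℝ) - t ≠ 0 := ne_of_gt h1tp
  have h1b1 : (0:ℝ) < 1 - b1 := by linarith
  have h1b2 : (0:ℝ) < 1 - b2 := by linarith
  have h1s1 : (0:ℝ) < 1 - s1 := by linarith
  have hP : (0:ℝ) < (1 - s1) * φ1 := mul_pos h1s1 hφ1
  have hdenpos : (0:ℝ) < 2 * (1 - b1) * (1 - t) * (1 - s1) * φ1 :=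
    mul_pos (mul_pos (mul_pos (mul_pos two_pos h1b1) h1tp) h1s1) hφ1
  have hden : (2 * (1 - b1) * (1 - t) * (1 - s1) * φ1 : ℝ) ≠ 0 := ne_of_gt hdenpos
  have hΔne : Dk m b1 b2 t s1 s2 φ1 φ2 ≠ 0 := ne_of_gt hΔ
  have hone : HasDerivAt (fun τ : ℝ => 1 - τ) (-1) t := by
    simpa using (hasDerivAt_id t).const_sub 1
  set S2 := Stwo b2 s2 φ2 with hS2def
  have hquot : HasDerivAt (fun τ : ℝ => c1 / (1 - τ))
      ((0 * (1 - t) - c1 * (-1)) / (1 - t) ^ 2) t :=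
    (hasDerivAt_const t c1).div hone h1t
  have hnum : HasDerivAt
      (fun τ : ℝ => (a - c1 / (1 - τ)) * S2 / (2 * (1 - b1)) - m * (a - c2) / (2 * (1 - b2)))
      ((-((0 * (1 - t) - c1 * (-1)) / (1 - t) ^ 2) * S2 / (2 * (1 - b1))) - 0) t :=
    ((((hquot.const_sub a).mul_const S2).div_const (2 * (1 - b1))).sub
      (hasDerivAt_const t (m * (a - c2) / (2 * (1 - b2)))))
  have hdenf : HasDerivAt (fun τ : ℝ => 2 * (1 - b1) * (1 - τ) * (1 - s1) * φ1)
      (2 * (1 - b1) * (-1) * (1 - s1) * φ1) t :=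
    (((hone.const_mul (2 * (1 - b1))).mul_const (1 - s1)).mul_const φ1)
  have hSone : HasDerivAt (fun τ : ℝ => Sone b1 τ s1 φ1)
      (-((0 * (2 * (1 - b1) * (1 - t) * (1 - s1) * φ1) -
          1 * (2 * (1 - b1) * (-1) * (1 - s1) * φ1)) /
          (2 * (1 - b1) * (1 - t) * (1 - s1) * φ1) ^ 2)) t := by
    have := ((hasDerivAt_const t (1:ℝ)).div hdenf hden).const_sub 1
    simpa [Sone] using this
  have hDk : HasDerivAt (fun τ : ℝ => Dk m b1 b2 τ s1 s2 φ1 φ2)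
      ((-((0 * (2 * (1 - b1) * (1 - t) * (1 - s1) * φ1) -
          1 * (2 * (1 - b1) * (-1) * (1 - s1) * φ1)) /
          (2 * (1 - b1) * (1 - t) * (1 - s1) * φ1) ^ 2)) * S2 - 0) t := by
    have := (hSone.mul_const S2).sub (hasDerivAt_const t (Mnet m b1 b2))
    exact this
  have hnonzeros : True := trivial
  have hq1d' : HasDerivAt (fun τ => q1e a c1 c2 m b1 b2 τ s1 s2 φ1 φ2)
      (-(1 / Dk m b1 b2 t s1 s2 φ1 φ2) *
        ((c1 - k1e a c1 c2 m b1 b2 t s1 s2 φ1 φ2) / (2 * (1 - b1) * (1 - t) ^ 2)) *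
        S2) t := by
    have h0 := hnum.div hDk hΔne
    have hfun : (fun τ => q1e a c1 c2 m b1 b2 τ s1 s2 φ1 φ2)
        = fun τ : ℝ => ((a - c1 / (1 - τ)) * S2 / (2 * (1 - b1))
            - m * (a - c2) / (2 * (1 - b2))) / Dk m b1 b2 τ s1 s2 φ1 φ2 := by
      funext τ; rfl
    rw [hfun]
    refine h0.congr_deriv ?_
    have hne1b1 : (1:ℝ) - b1 ≠ 0 := ne_of_gt h1b1
    have hne1b2 : (1:ℝ) - b2 ≠ 0 := ne_of_gt h1b2
    have hnes1 : (1:ℝ) - s1 ≠ 0 := ne_of_gt h1s1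
    have hneφ1 : φ1 ≠ 0 := ne_of_gt hφ1
    simp only [k1e, q1e, ← hS2def]
    field_simp
    ring
  have hneg : -(1 / Dk m b1 b2 t s1 s2 φ1 φ2) *
        ((c1 - k1e a c1 c2 m b1 b2 t s1 s2 φ1 φ2) / (2 * (1 - b1) * (1 - t) ^ 2)) *
        S2 < 0 := by
    have h1 : (0:ℝ) < 1 / Dk m b1 b2 t s1 s2 φ1 φ2 := by positivity
    have h2 : (0:ℝ) < (c1 - k1e a c1 c2 m b1 b2 t s1 s2 φ1 φ2) / (2 * (1 - b1) * (1 - t) ^ 2) :=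
      div_pos (by linarith) (mul_pos (mul_pos two_pos h1b1) (pow_pos h1tp 2))
    have := mul_pos (mul_pos h1 h2) hS2
    nlinarith
  have hk1d : HasDerivAt (fun τ => k1e a c1 c2 m b1 b2 τ s1 s2 φ1 φ2)
      ((-(1 / Dk m b1 b2 t s1 s2 φ1 φ2) *
        ((c1 - k1e a c1 c2 m b1 b2 t s1 s2 φ1 φ2) / (2 * (1 - b1) * (1 - t) ^ 2)) *
        S2) / ((1 - s1) * φ1)) t := by
    simpa [k1e] using hq1d'.div_const ((1 - s1) * φ1)
  exact ⟨hq1d', hneg, hk1d, div_neg_of_neg_of_pos hneg hP⟩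
end

section
/- Regard q1 and k1 as functions of the foreign subsidy s1 (all other parameters fixed). At any s1 ∈ (0,1) where the maintained assumptions hold, these functions are differentiable with dq1/ds1 = (1/Δ)·q1·S2/(2(1−b1)(1−t)(1−s1)²φ1) > 0 and dk1/ds1 = (q1/((1−s1)²φ1))·(S2 − M)/Δ > 0, where S2 − M > 0 follows from the maintained assumptions: the foreign subsidy strictly increases foreign output and foreign process R&D. -/
set_option maxHeartbeats 1600000 in
/-- The foreign subsidy strictly increases foreign output and foreign
process R&D: `dq1/ds1 = (1/Δ)·q1·S2/(2(1−b1)(1−t)(1−s1)²φ1) > 0` and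
`dk1/ds1 = (q1/((1−s1)²φ1))·(S2−M)/Δ > 0`, where `S2 − M > 0`. -/
theorem foreign_subsidy_increases_foreign_output_and_processRD
    (a c1 c2 m b1 b2 t s1 s2 φ1 φ2 : ℝ)
    (ha : 0 < a) (hc1 : 0 < c1) (hc2 : 0 < c2)
    (hb1 : b1 ∈ Set.Ioo (0 : ℝ) 1) (hb2 : b2 ∈ Set.Ioo (0 : ℝ) 1)
    (ht : t ∈ Set.Ioo (0 : ℝ) 1)
    (hs1 : s1 ∈ Set.Ioo (0 : ℝ) 1) (hs2 : s2 ∈ Set.Ioo (0 : ℝ) 1)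
    (hφ1 : 0 < φ1) (hφ2 : 0 < φ2)
    (hS1 : Sone b1 t s1 φ1 > 0) (hS2 : Stwo b2 s2 φ2 > 0)
    (hΔ : Dk m b1 b2 t s1 s2 φ1 φ2 > 0)
    (hq1 : q1e a c1 c2 m b1 b2 t s1 s2 φ1 φ2 > 0)
    (hq2 : q2e a c1 c2 m b1 b2 t s1 s2 φ1 φ2 > 0)
    :
    HasDerivAt (fun σ => q1e a c1 c2 m b1 b2 t σ s2 φ1 φ2)
      ((1 / Dk m b1 b2 t s1 s2 φ1 φ2) * q1e a c1 c2 m b1 b2 t s1 s2 φ1 φ2 *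
        Stwo b2 s2 φ2 / (2 * (1 - b1) * (1 - t) * (1 - s1) ^ 2 * φ1)) s1 ∧
    (1 / Dk m b1 b2 t s1 s2 φ1 φ2) * q1e a c1 c2 m b1 b2 t s1 s2 φ1 φ2 *
        Stwo b2 s2 φ2 / (2 * (1 - b1) * (1 - t) * (1 - s1) ^ 2 * φ1) > 0 ∧
    HasDerivAt (fun σ => k1e a c1 c2 m b1 b2 t σ s2 φ1 φ2)
      ((q1e a c1 c2 m b1 b2 t s1 s2 φ1 φ2 / ((1 - s1) ^ 2 * φ1)) *
        (Stwo b2 s2 φ2 - Mnet m b1 b2) / Dk m b1 b2 t s1 s2 φ1 φ2) s1 ∧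
    (q1e a c1 c2 m b1 b2 t s1 s2 φ1 φ2 / ((1 - s1) ^ 2 * φ1)) *
        (Stwo b2 s2 φ2 - Mnet m b1 b2) / Dk m b1 b2 t s1 s2 φ1 φ2 > 0 ∧
    Stwo b2 s2 φ2 - Mnet m b1 b2 > 0 := by
  obtain ⟨hb1a, hb1b⟩ := hb1
  obtain ⟨hta, htb⟩ := ht
  obtain ⟨hs1a, hs1b⟩ := hs1
  have hb1' : (0:ℝ) < 1 - b1 := by linarith
  have ht' : (0:ℝ) < 1 - t := by linarith
  have hs1' : (0:ℝ) < 1 - s1 := by linarith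
  set S2 := Stwo b2 s2 φ2 with hS2def
  set M := Mnet m b1 b2 with hMdef
  set Δ := Dk m b1 b2 t s1 s2 φ1 φ2 with hΔdef
  set N : ℝ := (a - c1 / (1 - t)) * S2 / (2 * (1 - b1)) - m * (a - c2) / (2 * (1 - b2))
    with hNdef
  have hg : (0:ℝ) < 2 * (1 - b1) * (1 - t) * (1 - s1) * φ1 := by positivity
  have hgne : (2 * (1 - b1) * (1 - t) * (1 - s1) * φ1 : ℝ) ≠ 0 := ne_of_gt hg
  have hΔne : Δ ≠ 0 := ne_of_gt hΔ
  -- S1 < 1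
  have hS1lt : Sone b1 t s1 φ1 < 1 := by
    have : (0:ℝ) < 1 / (2 * (1 - b1) * (1 - t) * (1 - s1) * φ1) := by positivity
    unfold Sone; linarith
  have hSM : S2 - M > 0 := by
    have hΔ' : Sone b1 t s1 φ1 * S2 - M > 0 := by
      have := hΔ; rw [hΔdef, Dk] at this; exact this
    nlinarith [mul_pos hS1 hS2]
  -- derivative of g σ = 2(1-b1)(1-t)(1-σ)φ1
  have h1 : HasDerivAt (fun σ : ℝ => 1 - σ) (-1) s1 := by
    simpa using (hasDerivAt_id s1).const_sub 1
  have h2 : HasDerivAt (fun σ : ℝ => 2 * (1 - b1) * (1 - t) * (1 - σ) * φ1)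
      (2 * (1 - b1) * (1 - t) * (-1) * φ1) s1 :=
    (h1.const_mul (2 * (1 - b1) * (1 - t))).mul_const φ1
  have h3 : HasDerivAt (fun σ : ℝ => (2 * (1 - b1) * (1 - t) * (1 - σ) * φ1)⁻¹)
      (-(2 * (1 - b1) * (1 - t) * (-1) * φ1) /
        (2 * (1 - b1) * (1 - t) * (1 - s1) * φ1) ^ 2) s1 := h2.inv hgne
  have h4 : HasDerivAt (fun σ : ℝ => Sone b1 t σ φ1)
      (-(-(2 * (1 - b1) * (1 - t) * (-1) * φ1) /
        (2 * (1 - b1) * (1 - t) * (1 - s1) * φ1) ^ 2)) s1 := by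
    simp only [Sone, one_div]
    exact h3.const_sub 1
  set D' : ℝ := -(-(2 * (1 - b1) * (1 - t) * (-1) * φ1) /
        (2 * (1 - b1) * (1 - t) * (1 - s1) * φ1) ^ 2) * S2 with hD'def
  have h5 : HasDerivAt (fun σ : ℝ => Dk m b1 b2 t σ s2 φ1 φ2) D' s1 := by
    simp only [Dk]
    exact (h4.mul_const S2).sub_const M
  have h6 : HasDerivAt (fun σ : ℝ => (Dk m b1 b2 t σ s2 φ1 φ2)⁻¹) (-D' / Δ ^ 2) s1 :=
    h5.inv hΔne
  have h7 : HasDerivAt (fun σ : ℝ => q1e a c1 c2 m b1 b2 t σ s2 φ1 φ2)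
      (N * (-D' / Δ ^ 2)) s1 := by
    simp only [q1e, div_eq_mul_inv, ← hNdef, ← hS2def]
    exact h6.const_mul N
  have hq1N : q1e a c1 c2 m b1 b2 t s1 s2 φ1 φ2 = N / Δ := by
    rw [q1e, ← hS2def, ← hΔdef, ← hNdef]
  have hderiv_eq : N * (-D' / Δ ^ 2) =
      (1 / Δ) * q1e a c1 c2 m b1 b2 t s1 s2 φ1 φ2 * S2 /
        (2 * (1 - b1) * (1 - t) * (1 - s1) ^ 2 * φ1) := by
    rw [hq1N, hD'def]
    field_simp
  have HQ : HasDerivAt (fun σ => q1e a c1 c2 m b1 b2 t σ s2 φ1 φ2)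
      ((1 / Δ) * q1e a c1 c2 m b1 b2 t s1 s2 φ1 φ2 * S2 /
        (2 * (1 - b1) * (1 - t) * (1 - s1) ^ 2 * φ1)) s1 := hderiv_eq ▸ h7
  have hpos1 : (1 / Δ) * q1e a c1 c2 m b1 b2 t s1 s2 φ1 φ2 * S2 /
      (2 * (1 - b1) * (1 - t) * (1 - s1) ^ 2 * φ1) > 0 := by positivity
  -- k1e
  have hu : HasDerivAt (fun σ : ℝ => (1 - σ) * φ1) (-1 * φ1) s1 := h1.mul_const φ1
  have hune : ((1 - s1) * φ1 : ℝ) ≠ 0 := by positivity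
  have hu' : HasDerivAt (fun σ : ℝ => ((1 - σ) * φ1)⁻¹)
      (-(-1 * φ1) / ((1 - s1) * φ1) ^ 2) s1 := hu.inv hune
  have h8 : HasDerivAt (fun σ : ℝ => k1e a c1 c2 m b1 b2 t σ s2 φ1 φ2)
      (N * (-D' / Δ ^ 2) * ((1 - s1) * φ1)⁻¹ +
       q1e a c1 c2 m b1 b2 t s1 s2 φ1 φ2 * (-(-1 * φ1) / ((1 - s1) * φ1) ^ 2)) s1 := by
    simp only [k1e, div_eq_mul_inv]
    exact h7.mul hu'
  have hΔexp : Δ = (1 - 1 / (2 * (1 - b1) * (1 - t) * (1 - s1) * φ1)) * S2 - M := by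
    rw [hΔdef, Dk, Sone, hMdef, hS2def]
  have hrel : S2 - M = Δ + S2 / (2 * (1 - b1) * (1 - t) * (1 - s1) * φ1) := by
    rw [hΔexp]; ring
  have hderiv_eq2 : N * (-D' / Δ ^ 2) * ((1 - s1) * φ1)⁻¹ +
       q1e a c1 c2 m b1 b2 t s1 s2 φ1 φ2 * (-(-1 * φ1) / ((1 - s1) * φ1) ^ 2) =
      (q1e a c1 c2 m b1 b2 t s1 s2 φ1 φ2 / ((1 - s1) ^ 2 * φ1)) * (S2 - M) / Δ := by
    rw [hq1N, hD'def, hrel]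
    field_simp
    ring
  have HK : HasDerivAt (fun σ => k1e a c1 c2 m b1 b2 t σ s2 φ1 φ2)
      ((q1e a c1 c2 m b1 b2 t s1 s2 φ1 φ2 / ((1 - s1) ^ 2 * φ1)) * (S2 - M) / Δ) s1 :=
    hderiv_eq2 ▸ h8
  have hpos2 : (q1e a c1 c2 m b1 b2 t s1 s2 φ1 φ2 / ((1 - s1) ^ 2 * φ1)) *
      (S2 - M) / Δ > 0 := by positivity
  exact ⟨HQ, hpos1, HK, hpos2, hSM⟩
end

section
/- Regard q2 and k2 as functions of the home subsidy s2 (all other parameters fixed). At any s2 ∈ (0,1) where the maintained assumptions hold, these functions are differentiable with dq2/ds2 = (1/Δ)·q2·S1/(2(1−b2)(1−s2)²φ2) > 0 and dk2/ds2 = (q2/((1−s2)²φ2))·(S1 − M)/Δ > 0, where S1 − M > 0 follows from the maintained assumptions: the home subsidy always strictly increases home output and home process R&D. -/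
/-- The home subsidy always strictly increases home output and home
process R&D: `dq2/ds2 = (1/Δ)·q2·S1/(2(1−b2)(1−s2)²φ2) > 0` and
`dk2/ds2 = (q2/((1−s2)²φ2))·(S1−M)/Δ > 0`, where `S1 − M > 0`. -/
theorem home_subsidy_increases_home_output_and_processRD
    (a c1 c2 m b1 b2 t s1 s2 φ1 φ2 : ℝ)
    (ha : 0 < a) (hc1 : 0 < c1) (hc2 : 0 < c2)
    (hb1 : b1 ∈ Set.Ioo (0 : ℝ) 1) (hb2 : b2 ∈ Set.Ioo (0 : ℝ) 1)
    (ht : t ∈ Set.Ioo (0 : ℝ) 1)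
    (hs1 : s1 ∈ Set.Ioo (0 : ℝ) 1) (hs2 : s2 ∈ Set.Ioo (0 : ℝ) 1)
    (hφ1 : 0 < φ1) (hφ2 : 0 < φ2)
    (hS1 : Sone b1 t s1 φ1 > 0) (hS2 : Stwo b2 s2 φ2 > 0)
    (hΔ : Dk m b1 b2 t s1 s2 φ1 φ2 > 0)
    (hq1 : q1e a c1 c2 m b1 b2 t s1 s2 φ1 φ2 > 0)
    (hq2 : q2e a c1 c2 m b1 b2 t s1 s2 φ1 φ2 > 0)
    :
    HasDerivAt (fun σ => q2e a c1 c2 m b1 b2 t s1 σ φ1 φ2)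
      ((1 / Dk m b1 b2 t s1 s2 φ1 φ2) * q2e a c1 c2 m b1 b2 t s1 s2 φ1 φ2 *
        Sone b1 t s1 φ1 / (2 * (1 - b2) * (1 - s2) ^ 2 * φ2)) s2 ∧
    (1 / Dk m b1 b2 t s1 s2 φ1 φ2) * q2e a c1 c2 m b1 b2 t s1 s2 φ1 φ2 *
        Sone b1 t s1 φ1 / (2 * (1 - b2) * (1 - s2) ^ 2 * φ2) > 0 ∧
    HasDerivAt (fun σ => k2e a c1 c2 m b1 b2 t s1 σ φ1 φ2)
      ((q2e a c1 c2 m b1 b2 t s1 s2 φ1 φ2 / ((1 - s2) ^ 2 * φ2)) *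
        (Sone b1 t s1 φ1 - Mnet m b1 b2) / Dk m b1 b2 t s1 s2 φ1 φ2) s2 ∧
    (q2e a c1 c2 m b1 b2 t s1 s2 φ1 φ2 / ((1 - s2) ^ 2 * φ2)) *
        (Sone b1 t s1 φ1 - Mnet m b1 b2) / Dk m b1 b2 t s1 s2 φ1 φ2 > 0 ∧
    Sone b1 t s1 φ1 - Mnet m b1 b2 > 0 := by
  obtain ⟨hb1l, hb1r⟩ := hb1
  obtain ⟨hb2l, hb2r⟩ := hb2
  obtain ⟨htl, htr⟩ := ht
  obtain ⟨hs2l, hs2r⟩ := hs2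
  have h1b2 : (0:ℝ) < 1 - b2 := by linarith
  have h1s2 : (0:ℝ) < 1 - s2 := by linarith
  have hg : (0:ℝ) < 2 * (1 - b2) * (1 - s2) * φ2 := by positivity
  have hΔ' : Dk m b1 b2 t s1 s2 φ1 φ2 ≠ 0 := ne_of_gt hΔ
  -- derivative of g σ = 2(1-b2)(1-σ)φ2
  have hgd : HasDerivAt (fun σ : ℝ => 2 * (1 - b2) * (1 - σ) * φ2)
      (2 * (1 - b2) * (-1) * φ2) s2 :=
    (((hasDerivAt_id s2).const_sub 1).const_mul (2 * (1 - b2))).mul_const φ2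
  -- derivative of Stwo
  have hStd : HasDerivAt (fun σ : ℝ => Stwo b2 σ φ2)
      (-((0 * (2 * (1 - b2) * (1 - s2) * φ2) - 1 * (2 * (1 - b2) * (-1) * φ2)) /
        (2 * (1 - b2) * (1 - s2) * φ2) ^ 2)) s2 := by
    simpa [Stwo] using
      (((hasDerivAt_const s2 (1:ℝ)).div hgd (ne_of_gt hg)).const_sub 1)
  -- derivative of Dk
  have hDkd : HasDerivAt (fun σ : ℝ => Dk m b1 b2 t s1 σ φ1 φ2)
      (Sone b1 t s1 φ1 *
        (-((0 * (2 * (1 - b2) * (1 - s2) * φ2) - 1 * (2 * (1 - b2) * (-1) * φ2)) /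
          (2 * (1 - b2) * (1 - s2) * φ2) ^ 2))) s2 := by
    simpa [Dk] using (hStd.const_mul (Sone b1 t s1 φ1)).sub_const (Mnet m b1 b2)
  set N := (a - c2) * Sone b1 t s1 φ1 / (2 * (1 - b2))
      - m * (a - c1 / (1 - t)) / (2 * (1 - b1)) with hN
  have hDkfun : ∀ σ : ℝ, Dk m b1 b2 t s1 σ φ1 φ2 ≠ 0 → q2e a c1 c2 m b1 b2 t s1 σ φ1 φ2
      = N / Dk m b1 b2 t s1 σ φ1 φ2 := fun σ _ => rfl
  have hq2d : HasDerivAt (fun σ : ℝ => q2e a c1 c2 m b1 b2 t s1 σ φ1 φ2)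
      ((0 * Dk m b1 b2 t s1 s2 φ1 φ2 - N *
        (Sone b1 t s1 φ1 *
          (-((0 * (2 * (1 - b2) * (1 - s2) * φ2) - 1 * (2 * (1 - b2) * (-1) * φ2)) /
            (2 * (1 - b2) * (1 - s2) * φ2) ^ 2)))) /
        (Dk m b1 b2 t s1 s2 φ1 φ2) ^ 2) s2 := by
    have := (hasDerivAt_const s2 N).div hDkd hΔ'
    exact this.congr_of_eventuallyEq (by filter_upwards with σ; rfl)
  -- the stated q2 derivative value
  have hq2val : (0 * Dk m b1 b2 t s1 s2 φ1 φ2 - N *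
        (Sone b1 t s1 φ1 *
          (-((0 * (2 * (1 - b2) * (1 - s2) * φ2) - 1 * (2 * (1 - b2) * (-1) * φ2)) /
            (2 * (1 - b2) * (1 - s2) * φ2) ^ 2)))) /
        (Dk m b1 b2 t s1 s2 φ1 φ2) ^ 2
      = (1 / Dk m b1 b2 t s1 s2 φ1 φ2) * q2e a c1 c2 m b1 b2 t s1 s2 φ1 φ2 *
        Sone b1 t s1 φ1 / (2 * (1 - b2) * (1 - s2) ^ 2 * φ2) := by
    have hq2eq : q2e a c1 c2 m b1 b2 t s1 s2 φ1 φ2 = N / Dk m b1 b2 t s1 s2 φ1 φ2 := rfl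
    rw [hq2eq]
    field_simp
    ring
  have Hq2 : HasDerivAt (fun σ => q2e a c1 c2 m b1 b2 t s1 σ φ1 φ2)
      ((1 / Dk m b1 b2 t s1 s2 φ1 φ2) * q2e a c1 c2 m b1 b2 t s1 s2 φ1 φ2 *
        Sone b1 t s1 φ1 / (2 * (1 - b2) * (1 - s2) ^ 2 * φ2)) s2 := hq2val ▸ hq2d
  -- k2 derivative
  have hhd : HasDerivAt (fun σ : ℝ => (1 - σ) * φ2) ((-1) * φ2) s2 :=
    ((hasDerivAt_id s2).const_sub 1).mul_const φ2
  have hh : ((1 - s2) * φ2) ≠ 0 := by positivity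
  have hk2d : HasDerivAt (fun σ : ℝ => q2e a c1 c2 m b1 b2 t s1 σ φ1 φ2 / ((1 - σ) * φ2)) _ s2 :=
    Hq2.div hhd hh
  have hk2fun : (fun σ : ℝ => k2e a c1 c2 m b1 b2 t s1 σ φ1 φ2)
      = fun σ : ℝ => q2e a c1 c2 m b1 b2 t s1 σ φ1 φ2 / ((1 - σ) * φ2) := rfl
  rw [← hk2fun] at hk2d
  -- rewrite the k2 derivative value to the stated form
  have hk2val : ((1 / Dk m b1 b2 t s1 s2 φ1 φ2) * q2e a c1 c2 m b1 b2 t s1 s2 φ1 φ2 *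
        Sone b1 t s1 φ1 / (2 * (1 - b2) * (1 - s2) ^ 2 * φ2) * ((1 - s2) * φ2)
        - q2e a c1 c2 m b1 b2 t s1 s2 φ1 φ2 * ((-1) * φ2)) / ((1 - s2) * φ2) ^ 2
      = (q2e a c1 c2 m b1 b2 t s1 s2 φ1 φ2 / ((1 - s2) ^ 2 * φ2)) *
        (Sone b1 t s1 φ1 - Mnet m b1 b2) / Dk m b1 b2 t s1 s2 φ1 φ2 := by
    have hSMeq : Sone b1 t s1 φ1 - Mnet m b1 b2
        = Sone b1 t s1 φ1 / (2 * (1 - b2) * (1 - s2) * φ2) + Dk m b1 b2 t s1 s2 φ1 φ2 := by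
      simp only [Dk, Stwo]
      field_simp
      ring
    rw [hSMeq]
    have h2 : (2:ℝ) * (1 - b2) ≠ 0 := by positivity
    have h3 : (1 - s2) ≠ 0 := ne_of_gt h1s2
    have h4 : φ2 ≠ 0 := ne_of_gt hφ2
    field_simp
    ring
  rw [hk2val] at hk2d
  -- positivity facts
  have hSt1 : Stwo b2 s2 φ2 < 1 := by
    have h0 : 0 < 1 / (2 * (1 - b2) * (1 - s2) * φ2) := by positivity
    simp only [Stwo]; linarith
  have hSM : Sone b1 t s1 φ1 - Mnet m b1 b2 > 0 := by
    have h2 : Mnet m b1 b2 < Sone b1 t s1 φ1 * Stwo b2 s2 φ2 := by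
      have := hΔ; simp only [Dk] at this; linarith
    nlinarith
  have hpos1 : (1 / Dk m b1 b2 t s1 s2 φ1 φ2) * q2e a c1 c2 m b1 b2 t s1 s2 φ1 φ2 *
      Sone b1 t s1 φ1 / (2 * (1 - b2) * (1 - s2) ^ 2 * φ2) > 0 := by
    apply div_pos (mul_pos (mul_pos (by positivity) hq2) hS1) (by positivity)
  have hpos2 : (q2e a c1 c2 m b1 b2 t s1 s2 φ1 φ2 / ((1 - s2) ^ 2 * φ2)) *
      (Sone b1 t s1 φ1 - Mnet m b1 b2) / Dk m b1 b2 t s1 s2 φ1 φ2 > 0 := by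
    apply div_pos (mul_pos (by positivity) hSM) hΔ
  exact ⟨Hq2, hpos1, hk2d, hpos2, hSM⟩
end

section
/- Suppose the maintained assumptions hold at a given s1 ∈ (0,1) and m ≠ 0. Then the foreign government's first-order condition −(1−t)·q1·m·D2 − s1·φ1·k1·D1 = 0, where D2 := −(1/Δ)·m·q1/(4(1−b1)(1−b2)(1−t)(1−s1)²φ1) is the derivative of q2 with respect to s1 and D1 := (q1/((1−s1)²φ1))·(S2 − M)/Δ is the derivative of k1 with respect to s1, holds if and only if s1·S2 = M, i.e., if and only if s1 equals the best-response value s1* = [m²/(4(1−b1)(1−b2))]/S2. -/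
/-- For `m ≠ 0`, the foreign government's first-order condition
`−(1−t)·q1·m·D2 − s1·φ1·k1·D1 = 0` (with `D2 = dq2/ds1` and `D1 = dk1/ds1`) holds
iff `s1·S2 = M`, i.e. iff `s1 = M/S2 = [m²/(4(1−b1)(1−b2))]/S2`. -/
theorem foreign_FOC_iff_best_response_processRD
    (a c1 c2 m b1 b2 t s1 s2 φ1 φ2 : ℝ)
    (ha : 0 < a) (hc1 : 0 < c1) (hc2 : 0 < c2)
    (hb1 : b1 ∈ Set.Ioo (0 : ℝ) 1) (hb2 : b2 ∈ Set.Ioo (0 : ℝ) 1)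
    (ht : t ∈ Set.Ioo (0 : ℝ) 1)
    (hs1 : s1 ∈ Set.Ioo (0 : ℝ) 1) (hs2 : s2 ∈ Set.Ioo (0 : ℝ) 1)
    (hφ1 : 0 < φ1) (hφ2 : 0 < φ2)
    (hS1 : Sone b1 t s1 φ1 > 0) (hS2 : Stwo b2 s2 φ2 > 0)
    (hΔ : Dk m b1 b2 t s1 s2 φ1 φ2 > 0)
    (hq1 : q1e a c1 c2 m b1 b2 t s1 s2 φ1 φ2 > 0)
    (hq2 : q2e a c1 c2 m b1 b2 t s1 s2 φ1 φ2 > 0)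
    (hm : m ≠ 0) :
    (-(1 - t) * q1e a c1 c2 m b1 b2 t s1 s2 φ1 φ2 * m *
        (-(1 / Dk m b1 b2 t s1 s2 φ1 φ2) * m * q1e a c1 c2 m b1 b2 t s1 s2 φ1 φ2 /
          (4 * (1 - b1) * (1 - b2) * (1 - t) * (1 - s1) ^ 2 * φ1))
      - s1 * φ1 * k1e a c1 c2 m b1 b2 t s1 s2 φ1 φ2 *
        ((q1e a c1 c2 m b1 b2 t s1 s2 φ1 φ2 / ((1 - s1) ^ 2 * φ1)) *
          (Stwo b2 s2 φ2 - Mnet m b1 b2) / Dk m b1 b2 t s1 s2 φ1 φ2) = 0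
      ↔ s1 * Stwo b2 s2 φ2 = Mnet m b1 b2) ∧
    (-(1 - t) * q1e a c1 c2 m b1 b2 t s1 s2 φ1 φ2 * m *
        (-(1 / Dk m b1 b2 t s1 s2 φ1 φ2) * m * q1e a c1 c2 m b1 b2 t s1 s2 φ1 φ2 /
          (4 * (1 - b1) * (1 - b2) * (1 - t) * (1 - s1) ^ 2 * φ1))
      - s1 * φ1 * k1e a c1 c2 m b1 b2 t s1 s2 φ1 φ2 *
        ((q1e a c1 c2 m b1 b2 t s1 s2 φ1 φ2 / ((1 - s1) ^ 2 * φ1)) *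
          (Stwo b2 s2 φ2 - Mnet m b1 b2) / Dk m b1 b2 t s1 s2 φ1 φ2) = 0
      ↔ s1 = (m ^ 2 / (4 * (1 - b1) * (1 - b2))) / Stwo b2 s2 φ2) := by
  obtain ⟨hb1a, hb1b⟩ := hb1
  obtain ⟨hb2a, hb2b⟩ := hb2
  obtain ⟨hta, htb⟩ := ht
  obtain ⟨hs1a, hs1b⟩ := hs1
  have h1b1 : (1 - b1) ≠ 0 := ne_of_gt (by linarith)
  have h1b2 : (1 - b2) ≠ 0 := ne_of_gt (by linarith)
  have h1t : (1 - t) ≠ 0 := ne_of_gt (by linarith)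
  have h1s1pos : (0:ℝ) < 1 - s1 := by linarith
  have h1s1 : (1 - s1) ≠ 0 := ne_of_gt h1s1pos
  have hφ1' : φ1 ≠ 0 := ne_of_gt hφ1
  have hΔ' : Dk m b1 b2 t s1 s2 φ1 φ2 ≠ 0 := ne_of_gt hΔ
  have hq' : q1e a c1 c2 m b1 b2 t s1 s2 φ1 φ2 ≠ 0 := ne_of_gt hq1
  have hC : (0:ℝ) < q1e a c1 c2 m b1 b2 t s1 s2 φ1 φ2 ^ 2 /
      ((1 - s1) ^ 3 * φ1 * Dk m b1 b2 t s1 s2 φ1 φ2) := by positivity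
  have key : -(1 - t) * q1e a c1 c2 m b1 b2 t s1 s2 φ1 φ2 * m *
        (-(1 / Dk m b1 b2 t s1 s2 φ1 φ2) * m * q1e a c1 c2 m b1 b2 t s1 s2 φ1 φ2 /
          (4 * (1 - b1) * (1 - b2) * (1 - t) * (1 - s1) ^ 2 * φ1))
      - s1 * φ1 * k1e a c1 c2 m b1 b2 t s1 s2 φ1 φ2 *
        ((q1e a c1 c2 m b1 b2 t s1 s2 φ1 φ2 / ((1 - s1) ^ 2 * φ1)) *
          (Stwo b2 s2 φ2 - Mnet m b1 b2) / Dk m b1 b2 t s1 s2 φ1 φ2)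
      = (q1e a c1 c2 m b1 b2 t s1 s2 φ1 φ2 ^ 2 /
          ((1 - s1) ^ 3 * φ1 * Dk m b1 b2 t s1 s2 φ1 φ2)) *
        (Mnet m b1 b2 - s1 * Stwo b2 s2 φ2) := by
    rw [k1e, Mnet]
    field_simp
    ring
  have main : (-(1 - t) * q1e a c1 c2 m b1 b2 t s1 s2 φ1 φ2 * m *
        (-(1 / Dk m b1 b2 t s1 s2 φ1 φ2) * m * q1e a c1 c2 m b1 b2 t s1 s2 φ1 φ2 /
          (4 * (1 - b1) * (1 - b2) * (1 - t) * (1 - s1) ^ 2 * φ1))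
      - s1 * φ1 * k1e a c1 c2 m b1 b2 t s1 s2 φ1 φ2 *
        ((q1e a c1 c2 m b1 b2 t s1 s2 φ1 φ2 / ((1 - s1) ^ 2 * φ1)) *
          (Stwo b2 s2 φ2 - Mnet m b1 b2) / Dk m b1 b2 t s1 s2 φ1 φ2) = 0
      ↔ s1 * Stwo b2 s2 φ2 = Mnet m b1 b2) := by
    rw [key, mul_eq_zero, sub_eq_zero]
    constructor
    · rintro (h | h)
      · exact absurd h (ne_of_gt hC)
      · exact h.symm
    · intro h; exact Or.inr h.symm
  refine ⟨main, main.trans ?_⟩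
  rw [Mnet, eq_div_iff (ne_of_gt hS2)]
end

section
/- Suppose m = 0 and the maintained assumptions hold, so the m = 0 comparative statics are dq2/ds2 = q2/(2(1−b2)(1−s2)²φ2·S2) and dk2/ds2 = q2/((1−s2)²φ2·S2). Then the home government's first-order condition for the process-R&D subsidy, q2·(dq2/ds2) − (s2·q2/(1−s2))·(dk2/ds2) = 0, holds if and only if s2 = 1/(1 + 2(1−b2)). Moreover, the function b2 ↦ 1/(1 + 2(1−b2)) is strictly increasing on (0,1) and takes values in (1/3, 1): stronger network externalities call for a higher optimal home subsidy. -/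
/-- With independent goods (`m = 0`), the home government's
first-order condition `q2·(dq2/ds2) − (s2·q2/(1−s2))·(dk2/ds2) = 0` (with the
`m = 0` comparative statics) holds iff `s2 = 1/(1+2(1−b2))`; moreover,
`b2 ↦ 1/(1+2(1−b2))` is strictly increasing on `(0,1)` with values in `(1/3, 1)`. -/
theorem home_subsidy_optimum_processRD
    (a c1 c2 m b1 b2 t s1 s2 φ1 φ2 : ℝ)
    (ha : 0 < a) (hc1 : 0 < c1) (hc2 : 0 < c2)
    (hb1 : b1 ∈ Set.Ioo (0 : ℝ) 1) (hb2 : b2 ∈ Set.Ioo (0 : ℝ) 1)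
    (ht : t ∈ Set.Ioo (0 : ℝ) 1)
    (hs1 : s1 ∈ Set.Ioo (0 : ℝ) 1) (hs2 : s2 ∈ Set.Ioo (0 : ℝ) 1)
    (hφ1 : 0 < φ1) (hφ2 : 0 < φ2)
    (hS1 : Sone b1 t s1 φ1 > 0) (hS2 : Stwo b2 s2 φ2 > 0)
    (hΔ : Dk m b1 b2 t s1 s2 φ1 φ2 > 0)
    (hq1 : q1e a c1 c2 m b1 b2 t s1 s2 φ1 φ2 > 0)
    (hq2 : q2e a c1 c2 m b1 b2 t s1 s2 φ1 φ2 > 0)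
    (hm : m = 0) :
    (q2e a c1 c2 m b1 b2 t s1 s2 φ1 φ2 *
        (q2e a c1 c2 m b1 b2 t s1 s2 φ1 φ2 /
          (2 * (1 - b2) * (1 - s2) ^ 2 * φ2 * Stwo b2 s2 φ2))
      - (s2 * q2e a c1 c2 m b1 b2 t s1 s2 φ1 φ2 / (1 - s2)) *
        (q2e a c1 c2 m b1 b2 t s1 s2 φ1 φ2 /
          ((1 - s2) ^ 2 * φ2 * Stwo b2 s2 φ2)) = 0
      ↔ s2 = 1 / (1 + 2 * (1 - b2))) ∧
    StrictMonoOn (fun β : ℝ => 1 / (1 + 2 * (1 - β))) (Set.Ioo (0 : ℝ) 1) ∧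
    (∀ β ∈ Set.Ioo (0 : ℝ) 1,
      1 / (1 + 2 * (1 - β)) ∈ Set.Ioo (1 / 3 : ℝ) 1) := by

    obtain ⟨hb2a, hb2b⟩ := hb2
    obtain ⟨hs2a, hs2b⟩ := hs2
    have h1 : (0:ℝ) < 1 - b2 := by linarith
    have h2 : (0:ℝ) < 1 - s2 := by linarith
    set Q := q2e a c1 c2 m b1 b2 t s1 s2 φ1 φ2 with hQ
    set S := Stwo b2 s2 φ2 with hS
    refine ⟨?_, ?_, ?_⟩
    · have key : Q * (Q / (2 * (1 - b2) * (1 - s2) ^ 2 * φ2 * S))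
          - (s2 * Q / (1 - s2)) * (Q / ((1 - s2) ^ 2 * φ2 * S))
          = Q ^ 2 * ((1 - s2) - 2 * (1 - b2) * s2)
            / (2 * (1 - b2) * (1 - s2) ^ 3 * φ2 * S) := by
        field_simp
      rw [key]
      have hden : 2 * (1 - b2) * (1 - s2) ^ 3 * φ2 * S ≠ 0 := by positivity
      rw [div_eq_zero_iff]
      constructor
      · rintro (h | h)
        · rcases mul_eq_zero.mp h with h | h
          · exact absurd h (by positivity)
          · have h3 : (0:ℝ) < 1 + 2 * (1 - b2) := by linarith
            field_simp
            linarith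
        · exact absurd h hden
      · intro h
        left
        have h3 : (0:ℝ) < 1 + 2 * (1 - b2) := by linarith
        have : s2 * (1 + 2 * (1 - b2)) = 1 := by
          rw [h]; field_simp
        nlinarith
    · intro x hx y hy hxy
      have hx3 : (0:ℝ) < 1 + 2 * (1 - y) := by linarith [hy.2]
      have hy3 : (0:ℝ) < 1 + 2 * (1 - x) := by linarith [hx.2]
      simp only
      rw [div_lt_div_iff₀ hy3 hx3]
      linarith
    · intro β hβ
      have h3 : (0:ℝ) < 1 + 2 * (1 - β) := by linarith [hβ.2]
      constructor
      · rw [div_lt_div_iff₀ (by norm_num : (0:ℝ) < 3) h3]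
        linarith [hβ.1]
      · rw [div_lt_one h3]
        linarith [hβ.2]
end
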